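/- arXiv:2111.06929 — 3 statements merged into one kernel-verified Lean document; each statement's English description precedes it below -/
import Mathlib

section
/- Let d be a positive integer, let Σ₀ be a symmetric positive definite d×d real matrix, let G be a symmetric positive semi-definite d×d real matrix, and set A = (Σ₀⁻¹ + G)⁻¹. Let (Ω, 𝓕, P) be a probability space, let μ : Ω → ℝ^d be a square-integrable random vector with covariance matrix Σ̄ (i.e., Σ̄ᵢⱼ = Cov(μᵢ, μⱼ)), let ε : Ω → ℝ^d be a square-integrable random vector independent of μ with mean zero and covariance matrix A, and let B ∈ ℝ^d be a fixed vector. Define θ = A(Σ₀⁻¹ μ + B) + ε. Then the covariance matrix of θ equals A + A Σ₀⁻¹ Σ̄ Σ₀⁻¹ A. -/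
open Matrix MeasureTheory ProbabilityTheory ENNReal

/-- The covariance matrix of a random vector `X : Ω → ℝ^d`:
entry `(i, j)` is `E[(Xᵢ − E Xᵢ)(Xⱼ − E Xⱼ)]`. -/
noncomputable def covMatrix {Ω : Type*} [MeasurableSpace Ω] (P : Measure Ω) {d : ℕ}
    (X : Ω → Fin d → ℝ) : Matrix (Fin d) (Fin d) ℝ :=
  fun i j => ∫ ω, (X ω i - ∫ ω', X ω' i ∂P) * (X ω j - ∫ ω', X ω' j ∂P) ∂P

lemma l2_mul_int {Ω : Type*} [MeasurableSpace Ω] {P : Measure Ω} {f g : Ω → ℝ}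
    (hf : MemLp f 2 P) (hg : MemLp g 2 P) : Integrable (fun ω => f ω * g ω) P := by
  have h12 : (1 : ℝ≥0∞) / 1 = 1 / 2 + 1 / 2 := by
    rw [ENNReal.div_add_div_same, one_div_one]
    norm_num
    exact (ENNReal.div_self two_ne_zero ENNReal.ofNat_ne_top).symm
  have h := hg.smul (φ := f) hf (r := 1)
  simpa [smul_eq_mul, Pi.mul_def] using memLp_one_iff_integrable.mp h

/-- Posterior covariance decomposition (Lemma 2, first claim): if
`θ = A (Σ₀⁻¹ μ + B) + ε` with `A = (Σ₀⁻¹ + G)⁻¹` (here `S0 = Σ₀`), `μ` a square-integrable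
random vector with covariance `Σ̄ = Sbar`, and `ε` an independent zero-mean square-integrable
random vector with covariance `A`, then `Cov(θ) = A + A Σ₀⁻¹ Σ̄ Σ₀⁻¹ A`. -/
theorem covariance_decomposition
    {Ω : Type*} [MeasurableSpace Ω] (P : Measure Ω) [IsProbabilityMeasure P]
    {d : ℕ} (hd : 0 < d)
    (S0 G : Matrix (Fin d) (Fin d) ℝ) (hS0 : S0.PosDef) (hG : G.PosSemidef)
    (A : Matrix (Fin d) (Fin d) ℝ) (hA : A = (S0⁻¹ + G)⁻¹)
    (μ ε : Ω → Fin d → ℝ) (hμm : Measurable μ) (hεm : Measurable ε)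
    (hμ2 : ∀ i, MemLp (fun ω => μ ω i) 2 P)
    (hε2 : ∀ i, MemLp (fun ω => ε ω i) 2 P)
    (hindep : IndepFun μ ε P)
    (hε0 : ∀ i, ∫ ω, ε ω i ∂P = 0)
    (Sbar : Matrix (Fin d) (Fin d) ℝ) (hSbar : covMatrix P μ = Sbar)
    (hεcov : covMatrix P ε = A)
    (B : Fin d → ℝ)
    (θ : Ω → Fin d → ℝ) (hθ : θ = fun ω => A *ᵥ (S0⁻¹ *ᵥ μ ω + B) + ε ω) :
    covMatrix P θ = A + A * S0⁻¹ * Sbar * S0⁻¹ * A := by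
  classical
  set M : Matrix (Fin d) (Fin d) ℝ := A * S0⁻¹ with hM
  set m : Fin d → ℝ := fun k => ∫ ω, μ ω k ∂P with hm
  set X : Ω → Fin d → ℝ := fun ω k => μ ω k - m k with hXdef
  -- basic integrability
  have hμint : ∀ k, Integrable (fun ω => μ ω k) P := fun k => (hμ2 k).integrable one_le_two
  have hεint : ∀ k, Integrable (fun ω => ε ω k) P := fun k => (hε2 k).integrable one_le_two
  have hX2 : ∀ k, MemLp (fun ω => X ω k) 2 P := fun k => (hμ2 k).sub (memLp_const _)
  have hXint : ∀ k, Integrable (fun ω => X ω k) P :=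
    fun k => (hX2 k).integrable one_le_two
  have hX0 : ∀ k, ∫ ω, X ω k ∂P = 0 := by
    intro k
    simp only [hXdef]
    rw [integral_sub (hμint k) (integrable_const _)]
    simp [hm]
  -- pointwise form of θ
  have hθeq : ∀ ω i, θ ω i = (∑ k, M i k * μ ω k) + ((A *ᵥ B) i + ε ω i) := by
    intro ω i
    rw [hθ]
    show (A *ᵥ (S0⁻¹ *ᵥ μ ω + B) + ε ω) i = _
    rw [Matrix.mulVec_add, Matrix.mulVec_mulVec, ← hM]
    simp [Matrix.mulVec, dotProduct, add_assoc]
  -- mean of θ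
  have hEθ : ∀ i, ∫ ω, θ ω i ∂P = (∑ k, M i k * m k) + (A *ᵥ B) i := by
    intro i
    simp_rw [hθeq]
    have h1 : Integrable (fun ω => ∑ k, M i k * μ ω k) P :=
      integrable_finset_sum _ fun k _ => (hμint k).const_mul _
    have h2 : Integrable (fun ω => (A *ᵥ B) i + ε ω i) P :=
      (integrable_const _).add (hεint i)
    rw [integral_add h1 h2,
      integral_finset_sum _ fun k _ => (hμint k).const_mul _,
      integral_add (integrable_const _) (hεint i)]
    simp [hε0, integral_const_mul, hm]
  -- centered θ
  have hcent : ∀ ω i, θ ω i - ∫ ω', θ ω' i ∂P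
      = (∑ k, M i k * X ω k) + ε ω i := by
    intro ω i
    rw [hθeq, hEθ]
    simp only [hXdef, mul_sub, Finset.sum_sub_distrib]
    ring
  -- cross terms vanish by independence
  have hXεzero : ∀ k j, ∫ ω, X ω k * ε ω j ∂P = 0 := by
    intro k j
    have hind : IndepFun (fun ω => X ω k) (fun ω => ε ω j) P :=
      hindep.comp ((measurable_pi_apply k).sub measurable_const) (measurable_pi_apply j)
    have h := hind.integral_mul_eq_mul_integral (hXint k).aestronglyMeasurable (hεint j).aestronglyMeasurable
    simpa [Pi.mul_apply, hX0 k] using h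
  have hXX : ∀ k l, Integrable (fun ω => X ω k * X ω l) P :=
    fun k l => l2_mul_int (hX2 k) (hX2 l)
  have hXε : ∀ k j, Integrable (fun ω => X ω k * ε ω j) P :=
    fun k j => l2_mul_int (hX2 k) (hε2 j)
  have hεε : ∀ i j, Integrable (fun ω => ε ω i * ε ω j) P :=
    fun i j => l2_mul_int (hε2 i) (hε2 j)
  have hεεval : ∀ i j, ∫ ω, ε ω i * ε ω j ∂P = A i j := by
    intro i j
    rw [← hεcov]
    simp [covMatrix, hε0]
  have hXXval : ∀ k l, ∫ ω, X ω k * X ω l ∂P = Sbar k l := by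
    intro k l
    rw [← hSbar]; rfl
  -- entrywise computation
  funext i j
  have hexp : ∀ ω : Ω,
      (θ ω i - ∫ ω', θ ω' i ∂P) * (θ ω j - ∫ ω', θ ω' j ∂P)
      = (∑ k, ∑ l, M i k * M j l * (X ω k * X ω l))
        + ((∑ k, M i k * (X ω k * ε ω j))
        + ((∑ l, M j l * (X ω l * ε ω i)) + ε ω i * ε ω j)) := by
    intro ω
    have h1 : (∑ k, M i k * X ω k) * (∑ l, M j l * X ω l)
        = ∑ k, ∑ l, M i k * M j l * (X ω k * X ω l) := by
      rw [Finset.sum_mul_sum]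
      exact Finset.sum_congr rfl fun k _ => Finset.sum_congr rfl fun l _ => by ring
    have h2 : (∑ k, M i k * X ω k) * ε ω j = ∑ k, M i k * (X ω k * ε ω j) := by
      rw [Finset.sum_mul]
      exact Finset.sum_congr rfl fun k _ => by ring
    have h3 : ε ω i * (∑ l, M j l * X ω l) = ∑ l, M j l * (X ω l * ε ω i) := by
      rw [Finset.mul_sum]
      exact Finset.sum_congr rfl fun l _ => by ring
    rw [hcent ω i, hcent ω j, add_mul, mul_add, mul_add, h1, h2, h3]
    ring
  have key : covMatrix P θ i j = (∑ k, ∑ l, M i k * M j l * Sbar k l) + A i j := by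
    have hT1 : Integrable (fun ω => ∑ k, ∑ l, M i k * M j l * (X ω k * X ω l)) P :=
      integrable_finset_sum _ fun k _ => integrable_finset_sum _ fun l _ =>
        (hXX k l).const_mul _
    have hT2 : Integrable (fun ω => ∑ k, M i k * (X ω k * ε ω j)) P :=
      integrable_finset_sum _ fun k _ => (hXε k j).const_mul _
    have hT3 : Integrable (fun ω => ∑ l, M j l * (X ω l * ε ω i)) P :=
      integrable_finset_sum _ fun l _ => (hXε l i).const_mul _
    calc covMatrix P θ i j
        = ∫ ω, ((∑ k, ∑ l, M i k * M j l * (X ω k * X ω l))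
          + ((∑ k, M i k * (X ω k * ε ω j))
          + ((∑ l, M j l * (X ω l * ε ω i)) + ε ω i * ε ω j))) ∂P := by
          unfold covMatrix
          exact integral_congr_ae (Filter.Eventually.of_forall hexp)
      _ = (∑ k, ∑ l, M i k * M j l * Sbar k l) + A i j := by
          have hT34 : Integrable
              (fun ω => (∑ l, M j l * (X ω l * ε ω i)) + ε ω i * ε ω j) P :=
            hT3.add (hεε i j)
          have hT234 : Integrable (fun ω => (∑ k, M i k * (X ω k * ε ω j))
              + ((∑ l, M j l * (X ω l * ε ω i)) + ε ω i * ε ω j)) P :=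
            hT2.add hT34
          rw [integral_add hT1 hT234,
            integral_add hT2 hT34,
            integral_add hT3 (hεε i j),
            integral_finset_sum _ fun k _ => integrable_finset_sum _ fun l _ =>
              (hXX k l).const_mul _,
            integral_finset_sum _ fun k _ => (hXε k j).const_mul _,
            integral_finset_sum _ fun l _ => (hXε l i).const_mul _]
          simp_rw [integral_finset_sum _ fun l _ => (hXX _ l).const_mul _]
          simp_rw [integral_const_mul]
          simp_rw [hXXval]
          simp_rw [hεεval]
          simp_rw [hXεzero]
          simp
  rw [key]
  -- matrix algebra
  have hS0t : S0ᵀ = S0 := by simpa using hS0.isHermitian.eq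
  have hGt : Gᵀ = G := by simpa using hG.isHermitian.eq
  have hS0it : (S0⁻¹)ᵀ = S0⁻¹ := by rw [Matrix.transpose_nonsing_inv, hS0t]
  have hAt : Aᵀ = A := by
    rw [hA, Matrix.transpose_nonsing_inv, Matrix.transpose_add, hS0it, hGt]
  have hMt : Mᵀ = S0⁻¹ * A := by rw [hM, Matrix.transpose_mul, hS0it, hAt]
  have hmm : A + A * S0⁻¹ * Sbar * S0⁻¹ * A = A + M * Sbar * Mᵀ := by
    rw [hMt, hM, Matrix.mul_assoc (A * S0⁻¹ * Sbar) S0⁻¹ A]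
  rw [hmm]
  simp only [Matrix.add_apply, Matrix.mul_apply, Matrix.transpose_apply]
  rw [add_comm, Finset.sum_comm]
  congr 1
  refine Finset.sum_congr rfl fun l _ => ?_
  rw [Finset.sum_mul]
  exact Finset.sum_congr rfl fun k _ => by ring
end

section
/- Let d be a positive integer, let Σ₀ be a symmetric positive definite d×d real matrix, let G be a symmetric positive semi-definite d×d real matrix, and let Σ̄ be a symmetric positive semi-definite d×d real matrix. Then for every x ∈ ℝ^d, xᵀ (Σ₀⁻¹ + G)⁻¹ Σ₀⁻¹ Σ̄ Σ₀⁻¹ (Σ₀⁻¹ + G)⁻¹ x ≤ (λ₁(Σ₀)² λ₁(Σ̄) / λ_d(Σ₀)²) ‖x‖₂², where λ₁(M) and λ_d(M) denote the maximum and minimum eigenvalue of a symmetric d×d real matrix M, and ‖·‖₂ is the Euclidean norm. -/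
open Matrix Real

/-- Maximum eigenvalue λ₁ of a symmetric (Hermitian) real matrix. -/
noncomputable def maxEig {d : ℕ} (M : Matrix (Fin d) (Fin d) ℝ) : ℝ :=
  if h : M.IsHermitian then ⨆ i, h.eigenvalues i else 0

/-- Minimum eigenvalue λ_d of a symmetric (Hermitian) real matrix. -/
noncomputable def minEig {d : ℕ} (M : Matrix (Fin d) (Fin d) ℝ) : ℝ :=
  if h : M.IsHermitian then ⨅ i, h.eigenvalues i else 0

/-- The positive semidefinite square root of a positive semidefinite matrix
(junk value `1` otherwise). -/
noncomputable def matSqrt {d : ℕ} (M : Matrix (Fin d) (Fin d) ℝ) : Matrix (Fin d) (Fin d) ℝ :=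
  @dite _ M.PosSemidef (Classical.propDecidable _) (fun h => h.1.eigenvectorUnitary.1 *
    diagonal ((RCLike.ofReal : ℝ → ℝ) ∘ Real.sqrt ∘ h.1.eigenvalues) *
    (star h.1.eigenvectorUnitary : Matrix (Fin d) (Fin d) ℝ)) (fun _ => 1)

lemma dot_self_nonneg {d : ℕ} (v : Fin d → ℝ) : 0 ≤ v ⬝ᵥ v :=
  Finset.sum_nonneg fun i _ => mul_self_nonneg _

lemma herm_dot {d : ℕ} {M : Matrix (Fin d) (Fin d) ℝ} (hM : M.IsHermitian)
    (u v : Fin d → ℝ) : u ⬝ᵥ M *ᵥ v = (M *ᵥ u) ⬝ᵥ v := by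
  have ht : Mᵀ = M := by rw [← conjTranspose_eq_transpose_of_trivial]; exact hM
  have h2 : M *ᵥ u = u ᵥ* M := by nth_rewrite 1 [← ht]; rw [mulVec_transpose]
  rw [dotProduct_mulVec, h2]

lemma quad_repr {d : ℕ} {M : Matrix (Fin d) (Fin d) ℝ} (hM : M.IsHermitian)
    (x : Fin d → ℝ) :
    ∃ w : Fin d → ℝ, x ⬝ᵥ M *ᵥ x = ∑ i, hM.eigenvalues i * w i ^ 2 ∧
      x ⬝ᵥ x = ∑ i, w i ^ 2 := by
  set U : Matrix (Fin d) (Fin d) ℝ := (hM.eigenvectorUnitary : Matrix (Fin d) (Fin d) ℝ) with hUdef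
  refine ⟨star U *ᵥ x, ?_, ?_⟩
  · conv_lhs => rw [hM.spectral_theorem]
    rw [Unitary.conjStarAlgAut_apply, ← mulVec_mulVec, ← mulVec_mulVec, dotProduct_mulVec]
    have h3 : x ᵥ* U = star U *ᵥ x := by
      rw [← mulVec_transpose]
      congr 1
    rw [h3]
    simp [dotProduct, mulVec_diagonal, Finset.mul_sum]
    congr 1; ext i; ring
  · have h4 : (star U *ᵥ x) ⬝ᵥ (star U *ᵥ x) = x ⬝ᵥ x := by
      rw [dotProduct_mulVec, vecMul_mulVec]
      have h2 : (star U)ᵀ = U := by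
        ext i j; simp [Matrix.star_apply]
      rw [h2, (Matrix.mem_unitaryGroup_iff).mp hM.eigenvectorUnitary.2, vecMul_one]
    rw [← h4]
    simp [dotProduct, sq]

lemma rayleigh_up {d : ℕ} {M : Matrix (Fin d) (Fin d) ℝ} (hM : M.IsHermitian)
    (x : Fin d → ℝ) : x ⬝ᵥ M *ᵥ x ≤ maxEig M * (x ⬝ᵥ x) := by
  obtain ⟨w, h1, h2⟩ := quad_repr hM x
  rw [h1, h2, maxEig, dif_pos hM, Finset.mul_sum]
  refine Finset.sum_le_sum fun i _ => ?_
  exact mul_le_mul_of_nonneg_right (le_ciSup (Set.Finite.bddAbove (Set.finite_range _)) i)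
    (sq_nonneg _)

lemma rayleigh_lo {d : ℕ} {M : Matrix (Fin d) (Fin d) ℝ} (hM : M.IsHermitian)
    (x : Fin d → ℝ) : minEig M * (x ⬝ᵥ x) ≤ x ⬝ᵥ M *ᵥ x := by
  obtain ⟨w, h1, h2⟩ := quad_repr hM x
  rw [h1, h2, minEig, dif_pos hM, Finset.mul_sum]
  refine Finset.sum_le_sum fun i _ => ?_
  exact mul_le_mul_of_nonneg_right (ciInf_le (Set.Finite.bddBelow (Set.finite_range _)) i)
    (sq_nonneg _)

lemma vec_cs {d : ℕ} (u v : Fin d → ℝ) : (u ⬝ᵥ v) ^ 2 ≤ (u ⬝ᵥ u) * (v ⬝ᵥ v) := by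
  have := Finset.sum_mul_sq_le_sq_mul_sq Finset.univ u v
  simpa [dotProduct, pow_two] using this

lemma psd_cs {d : ℕ} {M : Matrix (Fin d) (Fin d) ℝ} (hM : M.PosSemidef)
    (u v : Fin d → ℝ) :
    (u ⬝ᵥ M *ᵥ v) ^ 2 ≤ (u ⬝ᵥ M *ᵥ u) * (v ⬝ᵥ M *ᵥ v) := by
  have hH := hM.isHermitian
  have hq : ∀ t : ℝ, 0 ≤ (v ⬝ᵥ M *ᵥ v) * (t * t) + (2 * (u ⬝ᵥ M *ᵥ v)) * t + (u ⬝ᵥ M *ᵥ u) := by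
    intro t
    have h0 := hM.dotProduct_mulVec_nonneg (u + t • v)
    simp only [star_trivial, mulVec_add, mulVec_smul, add_dotProduct, dotProduct_add,
      smul_dotProduct, dotProduct_smul, smul_eq_mul] at h0
    have hs : v ⬝ᵥ M *ᵥ u = u ⬝ᵥ M *ᵥ v := by rw [herm_dot hH, dotProduct_comm]
    rw [hs] at h0
    linarith
  have := discrim_le_zero hq
  unfold discrim at this
  nlinarith [this]

lemma minEig_pos {d : ℕ} (hd : 0 < d) {M : Matrix (Fin d) (Fin d) ℝ} (hM : M.PosDef) :
    0 < minEig M := by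
  haveI : Nonempty (Fin d) := ⟨⟨0, hd⟩⟩
  rw [minEig, dif_pos hM.isHermitian]
  obtain ⟨i, hi⟩ := Finite.exists_min hM.isHermitian.eigenvalues
  exact lt_of_lt_of_le (hM.eigenvalues_pos i) (le_ciInf hi)

lemma maxEig_pos {d : ℕ} (hd : 0 < d) {M : Matrix (Fin d) (Fin d) ℝ} (hM : M.PosDef) :
    0 < maxEig M := by
  haveI : Nonempty (Fin d) := ⟨⟨0, hd⟩⟩
  rw [maxEig, dif_pos hM.isHermitian]
  exact lt_of_lt_of_le (hM.eigenvalues_pos ⟨0, hd⟩)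
    (le_ciSup (Set.Finite.bddAbove (Set.finite_range _)) _)

lemma maxEig_nonneg {d : ℕ} (hd : 0 < d) {M : Matrix (Fin d) (Fin d) ℝ}
    (hM : M.PosSemidef) : 0 ≤ maxEig M := by
  haveI : Nonempty (Fin d) := ⟨⟨0, hd⟩⟩
  rw [maxEig, dif_pos hM.isHermitian]
  exact le_trans (hM.eigenvalues_nonneg ⟨0, hd⟩)
    (le_ciSup (Set.Finite.bddAbove (Set.finite_range _)) _)

/-- Lemma 2, second claim: for Σ₀ (= `S0`) symmetric positive definite, G and Σ̄ (= `Sbar`)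
symmetric positive semidefinite, and any x,
xᵀ (Σ₀⁻¹ + G)⁻¹ Σ₀⁻¹ Σ̄ Σ₀⁻¹ (Σ₀⁻¹ + G)⁻¹ x ≤ (λ₁(Σ₀)² λ₁(Σ̄) / λ_d(Σ₀)²) ‖x‖₂². -/
theorem hyper_variance_term_bound {d : ℕ} (hd : 0 < d)
    (S0 G Sbar : Matrix (Fin d) (Fin d) ℝ)
    (hS0 : S0.PosDef) (hG : G.PosSemidef) (hSbar : Sbar.PosSemidef)
    (x : Fin d → ℝ) :
    x ⬝ᵥ (((S0⁻¹ + G)⁻¹ * S0⁻¹ * Sbar * S0⁻¹ * (S0⁻¹ + G)⁻¹) *ᵥ x)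
      ≤ maxEig S0 ^ 2 * maxEig Sbar / minEig S0 ^ 2 * ∑ i, x i ^ 2 := by
  haveI : Nonempty (Fin d) := ⟨⟨0, hd⟩⟩
  have hB : (S0⁻¹).PosDef := hS0.inv
  have hT : (S0⁻¹ + G).PosDef := hB.add_posSemidef hG
  have hA : ((S0⁻¹ + G)⁻¹).PosDef := hT.inv
  set a := maxEig S0 with ha_def
  set b := minEig S0 with hb_def
  set c := maxEig Sbar with hc_def
  have ha : 0 < a := maxEig_pos hd hS0
  have hb : 0 < b := minEig_pos hd hS0
  have hc : 0 ≤ c := maxEig_nonneg hd hSbar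
  set y := (S0⁻¹ + G)⁻¹ *ᵥ x with hy_def
  set z := S0⁻¹ *ᵥ y with hz_def
  have hS0det : IsUnit S0.det := hS0.det_pos.ne'.isUnit
  have hTdet : IsUnit (S0⁻¹ + G).det := hT.det_pos.ne'.isUnit
  have hzy : S0 *ᵥ z = y := by
    rw [hz_def, mulVec_mulVec, mul_nonsing_inv S0 hS0det, one_mulVec]
  have hyx : (S0⁻¹ + G) *ᵥ y = x := by
    rw [hy_def, mulVec_mulVec, mul_nonsing_inv _ hTdet, one_mulVec]
  -- F0: the LHS as a quadratic form in z
  have F0 : x ⬝ᵥ (((S0⁻¹ + G)⁻¹ * S0⁻¹ * Sbar * S0⁻¹ * (S0⁻¹ + G)⁻¹) *ᵥ x)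
      = z ⬝ᵥ Sbar *ᵥ z := by
    rw [← mulVec_mulVec, ← mulVec_mulVec, ← mulVec_mulVec, ← mulVec_mulVec,
      herm_dot hA.isHermitian, ← hy_def, herm_dot hB.isHermitian, ← hz_def]
  have S1 : z ⬝ᵥ Sbar *ᵥ z ≤ c * (z ⬝ᵥ z) := rayleigh_up hSbar.isHermitian z
  have hzz : 0 ≤ z ⬝ᵥ z := dot_self_nonneg z
  have hyy : 0 ≤ y ⬝ᵥ y := dot_self_nonneg y
  have hxx : 0 ≤ x ⬝ᵥ x := dot_self_nonneg x
  -- S2 : b^2 * (z⬝z) ≤ y⬝y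
  have h21 : b * (z ⬝ᵥ z) ≤ z ⬝ᵥ S0 *ᵥ z := rayleigh_lo hS0.isHermitian z
  have h22 : (z ⬝ᵥ S0 *ᵥ z) ^ 2 ≤ (z ⬝ᵥ z) * (y ⬝ᵥ y) := by
    rw [hzy]; exact vec_cs z y
  have S2 : b ^ 2 * (z ⬝ᵥ z) ≤ y ⬝ᵥ y := by
    rcases eq_or_lt_of_le hzz with h | h
    · rw [← h]; simpa using hyy
    · have h23 : (b * (z ⬝ᵥ z)) ^ 2 ≤ (z ⬝ᵥ z) * (y ⬝ᵥ y) :=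
        le_trans (pow_le_pow_left₀ (by positivity) h21 2) h22
      nlinarith
  -- S3 : y⬝y ≤ a^2 * (x⬝x)
  have hq : z ⬝ᵥ y = z ⬝ᵥ S0 *ᵥ z := by rw [hzy]
  have hq0 : 0 ≤ z ⬝ᵥ y := by rw [hq]; nlinarith
  have h31 : (y ⬝ᵥ y) ^ 2 ≤ (z ⬝ᵥ y) * (a * (y ⬝ᵥ y)) := by
    have hcs := psd_cs hS0.posSemidef z y
    have e1 : z ⬝ᵥ S0 *ᵥ y = y ⬝ᵥ y := by rw [herm_dot hS0.isHermitian, hzy]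
    have e2 : y ⬝ᵥ S0 *ᵥ y ≤ a * (y ⬝ᵥ y) := rayleigh_up hS0.isHermitian y
    calc (y ⬝ᵥ y) ^ 2 = (z ⬝ᵥ S0 *ᵥ y) ^ 2 := by rw [e1]
      _ ≤ (z ⬝ᵥ S0 *ᵥ z) * (y ⬝ᵥ S0 *ᵥ y) := hcs
      _ ≤ (z ⬝ᵥ y) * (a * (y ⬝ᵥ y)) := by
          rw [← hq]
          exact mul_le_mul_of_nonneg_left e2 hq0
  have h32 : z ⬝ᵥ y ≤ y ⬝ᵥ x := by
    rw [← hyx, add_mulVec, dotProduct_add]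
    have : y ⬝ᵥ S0⁻¹ *ᵥ y = z ⬝ᵥ y := by
      rw [herm_dot hB.isHermitian, ← hz_def]
    rw [this]
    have := hG.dotProduct_mulVec_nonneg y
    simp only [star_trivial] at this
    linarith
  have h33 : (y ⬝ᵥ x) ^ 2 ≤ (y ⬝ᵥ y) * (x ⬝ᵥ x) := vec_cs y x
  have S3 : y ⬝ᵥ y ≤ a ^ 2 * (x ⬝ᵥ x) := by
    rcases eq_or_lt_of_le hyy with h | h
    · rw [← h]; positivity
    · have h34 : y ⬝ᵥ y ≤ a * (y ⬝ᵥ x) := by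
        have : (y ⬝ᵥ y) ^ 2 ≤ (y ⬝ᵥ x) * (a * (y ⬝ᵥ y)) :=
          le_trans h31 (by
            apply mul_le_mul_of_nonneg_right h32 (by positivity))
        nlinarith
      have hyx0 : 0 ≤ y ⬝ᵥ x := le_trans hq0 h32
      nlinarith
  -- combine
  have hsum : ∑ i, x i ^ 2 = x ⬝ᵥ x := by simp [dotProduct, sq]
  rw [F0, hsum]
  calc z ⬝ᵥ Sbar *ᵥ z ≤ c * (z ⬝ᵥ z) := S1
    _ ≤ c * ((y ⬝ᵥ y) / b ^ 2) := by
        apply mul_le_mul_of_nonneg_left _ hc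
        rw [le_div_iff₀ (by positivity)]
        linarith [S2]
    _ ≤ c * ((a ^ 2 * (x ⬝ᵥ x)) / b ^ 2) := by
        apply mul_le_mul_of_nonneg_left _ hc
        gcongr
    _ = a ^ 2 * c / b ^ 2 * (x ⬝ᵥ x) := by ring
end

section
/- Let d be a positive integer, σ > 0, let Σ₀ and G be symmetric positive definite d×d real matrices, let a ∈ ℝ^d, and set M = Σ₀⁻¹ + G. Then (Σ₀ + (G + σ⁻² a aᵀ)⁻¹)⁻¹ − (Σ₀ + G⁻¹)⁻¹ = σ⁻² Σ₀⁻¹ M⁻¹ a aᵀ M⁻¹ Σ₀⁻¹ / (1 + σ⁻² aᵀ M⁻¹ a). -/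
open Matrix

section Aux

variable {d : ℕ}

lemma mul_vecMulVec_mul (B : Matrix (Fin d) (Fin d) ℝ) (a : Fin d → ℝ) :
    vecMulVec a a * B * vecMulVec a a = (a ⬝ᵥ (B *ᵥ a)) • vecMulVec a a := by
  ext i j
  simp only [mul_apply, vecMulVec_apply, Matrix.smul_apply, dotProduct, mulVec, smul_eq_mul,
    Finset.sum_mul, Finset.mul_sum]
  rw [Finset.sum_comm]
  refine Finset.sum_congr rfl fun k _ => Finset.sum_congr rfl fun l _ => ?_
  ring

lemma posSemidef_vecMulVec_self (a : Fin d → ℝ) : (vecMulVec a a).PosSemidef := by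
  rw [posSemidef_iff_dotProduct_mulVec]
  constructor
  · ext i j
    simp [vecMulVec_apply, IsHermitian, conjTranspose_apply, mul_comm]
  · intro x
    have : star x ⬝ᵥ (vecMulVec a a *ᵥ x) = (a ⬝ᵥ x) * (a ⬝ᵥ x) := by
      simp only [dotProduct, mulVec, vecMulVec_apply, star_trivial, Finset.mul_sum,
        Finset.sum_mul]
      rw [Finset.sum_comm]
      refine Finset.sum_congr rfl fun i _ => Finset.sum_congr rfl fun j _ => ?_
      ring
    rw [this]
    exact mul_self_nonneg _

lemma posSemidef_smul' {A : Matrix (Fin d) (Fin d) ℝ} (hA : A.PosSemidef) {c : ℝ}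
    (hc : 0 ≤ c) : (c • A).PosSemidef := by
  rw [posSemidef_iff_dotProduct_mulVec]
  constructor
  · ext i j
    have := congrFun (congrFun hA.1 i) j
    simp only [conjTranspose_apply, Matrix.smul_apply, star_trivial, smul_eq_mul] at this ⊢
    simp [this]
  · intro x
    have h := hA.dotProduct_mulVec_nonneg x
    have : star x ⬝ᵥ ((c • A) *ᵥ x) = c * (star x ⬝ᵥ (A *ᵥ x)) := by
      simp [Matrix.smul_mulVec]
    rw [this]
    exact mul_nonneg hc h

/-- Woodbury-type identity: (S0 + H⁻¹)⁻¹ = S0⁻¹ - S0⁻¹ (S0⁻¹ + H)⁻¹ S0⁻¹. -/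
lemma woodbury_aux (S0 H : Matrix (Fin d) (Fin d) ℝ)
    (hS0 : S0.PosDef) (hH : H.PosDef) :
    (S0 + H⁻¹)⁻¹ = S0⁻¹ - S0⁻¹ * (S0⁻¹ + H)⁻¹ * S0⁻¹ := by
  have hK : (S0⁻¹ + H).PosDef := hS0.inv.add hH
  have hS0d : IsUnit S0.det := isUnit_iff_ne_zero.2 hS0.det_pos.ne'
  have hHd : IsUnit H.det := isUnit_iff_ne_zero.2 hH.det_pos.ne'
  have hKd : IsUnit (S0⁻¹ + H).det := isUnit_iff_ne_zero.2 hK.det_pos.ne'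
  have key : S0 + H⁻¹ = H⁻¹ * (S0⁻¹ + H) * S0 := by
    rw [Matrix.mul_add, Matrix.nonsing_inv_mul _ hHd, Matrix.add_mul, Matrix.one_mul,
      Matrix.mul_assoc, Matrix.nonsing_inv_mul _ hS0d, Matrix.mul_one, add_comm]
  rw [key, Matrix.mul_inv_rev, Matrix.mul_inv_rev, Matrix.nonsing_inv_nonsing_inv _ hHd]
  have : (S0⁻¹ + H)⁻¹ * H = 1 - (S0⁻¹ + H)⁻¹ * S0⁻¹ := by
    have : (S0⁻¹ + H)⁻¹ * (S0⁻¹ + H) = 1 := Matrix.nonsing_inv_mul _ hKd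
    rw [Matrix.mul_add] at this
    linear_combination (norm := noncomm_ring) this
  rw [Matrix.mul_assoc, this, Matrix.mul_sub, Matrix.mul_one]

end Aux

/-- Rank-one telescoping identity (Appendix B.2), via Woodbury and Sherman–Morrison:
with M = Σ₀⁻¹ + G (here S0 = Σ₀),
(Σ₀ + (G + σ⁻² a aᵀ)⁻¹)⁻¹ − (Σ₀ + G⁻¹)⁻¹
  = σ⁻² Σ₀⁻¹ M⁻¹ a aᵀ M⁻¹ Σ₀⁻¹ / (1 + σ⁻² aᵀ M⁻¹ a). -/
theorem rank_one_telescoping {d : ℕ} (hd : 0 < d)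
    (σ : ℝ) (hσ : 0 < σ)
    (S0 G : Matrix (Fin d) (Fin d) ℝ) (hS0 : S0.PosDef) (hG : G.PosDef)
    (a : Fin d → ℝ)
    (M : Matrix (Fin d) (Fin d) ℝ) (hM : M = S0⁻¹ + G) :
    (S0 + (G + (σ ^ 2)⁻¹ • vecMulVec a a)⁻¹)⁻¹ - (S0 + G⁻¹)⁻¹
      = ((σ ^ 2)⁻¹ / (1 + (σ ^ 2)⁻¹ * (a ⬝ᵥ (M⁻¹ *ᵥ a)))) •
          (S0⁻¹ * M⁻¹ * vecMulVec a a * M⁻¹ * S0⁻¹) := by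
  set c : ℝ := (σ ^ 2)⁻¹ with hc
  have hcpos : 0 < c := by positivity
  set A : Matrix (Fin d) (Fin d) ℝ := vecMulVec a a with hA
  have hApsd : A.PosSemidef := posSemidef_vecMulVec_self a
  have hcA : (c • A).PosSemidef := posSemidef_smul' hApsd hcpos.le
  have hGc : (G + c • A).PosDef := hG.add_posSemidef hcA
  have hMpd : M.PosDef := hM ▸ hS0.inv.add hG
  have hMinv : M⁻¹.PosDef := hMpd.inv
  have hMd : IsUnit M.det := isUnit_iff_ne_zero.2 hMpd.det_pos.ne'
  set q : ℝ := a ⬝ᵥ (M⁻¹ *ᵥ a) with hq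
  have hq0 : 0 ≤ q := by simpa using hMinv.posSemidef.dotProduct_mulVec_nonneg a
  set β : ℝ := 1 + c * q with hβ
  have hβpos : 0 < β := by positivity
  -- Woodbury twice
  have w1 : (S0 + G⁻¹)⁻¹ = S0⁻¹ - S0⁻¹ * M⁻¹ * S0⁻¹ := by
    rw [woodbury_aux S0 G hS0 hG, hM]
  have w2 : (S0 + (G + c • A)⁻¹)⁻¹ = S0⁻¹ - S0⁻¹ * (M + c • A)⁻¹ * S0⁻¹ := by
    rw [woodbury_aux S0 (G + c • A) hS0 hGc, hM, add_assoc]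
  -- Sherman–Morrison
  have hMM : M * M⁻¹ = 1 := Matrix.mul_nonsing_inv _ hMd
  have hAMA : A * M⁻¹ * A = q • A := mul_vecMulVec_mul M⁻¹ a
  have sm : (M + c • A)⁻¹ = M⁻¹ - (c / β) • (M⁻¹ * A * M⁻¹) := by
    refine Matrix.inv_eq_right_inv ?_
    have h1 : M * ((c / β) • (M⁻¹ * A * M⁻¹)) = (c / β) • (A * M⁻¹) := by
      rw [Matrix.mul_smul, ← Matrix.mul_assoc, ← Matrix.mul_assoc, hMM, Matrix.one_mul]
    have h2 : (c • A) * M⁻¹ = c • (A * M⁻¹) := Matrix.smul_mul c A M⁻¹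
    have h3 : (c • A) * ((c / β) • (M⁻¹ * A * M⁻¹)) = (c * (c / β) * q) • (A * M⁻¹) := by
      rw [Matrix.smul_mul, Matrix.mul_smul, smul_smul,
        show A * (M⁻¹ * A * M⁻¹) = (A * M⁻¹ * A) * M⁻¹ by noncomm_ring, hAMA,
        Matrix.smul_mul, smul_smul]
    have hcoef : c - c / β - c * (c / β) * q = 0 := by
      field_simp
      ring
    calc (M + c • A) * (M⁻¹ - (c / β) • (M⁻¹ * A * M⁻¹))
        = M * M⁻¹ - M * ((c / β) • (M⁻¹ * A * M⁻¹)) + ((c • A) * M⁻¹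
            - (c • A) * ((c / β) • (M⁻¹ * A * M⁻¹))) := by
          rw [Matrix.add_mul, Matrix.mul_sub, Matrix.mul_sub]
      _ = 1 - (c / β) • (A * M⁻¹) + (c • (A * M⁻¹) - (c * (c / β) * q) • (A * M⁻¹)) := by
          rw [hMM, h1, h2, h3]
      _ = 1 + (c - c / β - c * (c / β) * q) • (A * M⁻¹) := by module
      _ = 1 := by rw [hcoef, zero_smul, add_zero]
  rw [w1, w2, sm]
  have key : S0⁻¹ - S0⁻¹ * (M⁻¹ - (c / β) • (M⁻¹ * A * M⁻¹)) * S0⁻¹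
      - (S0⁻¹ - S0⁻¹ * M⁻¹ * S0⁻¹)
      = (c / β) • (S0⁻¹ * (M⁻¹ * A * M⁻¹) * S0⁻¹) := by
    rw [Matrix.mul_sub, Matrix.sub_mul, Matrix.mul_smul, Matrix.smul_mul]
    abel
  rw [key]
  congr 1
  simp only [Matrix.mul_assoc]
end
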